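/- arXiv:1808.05784 — 2 statements merged into one kernel-verified Lean document; each statement's English description precedes it below -/
import Mathlib

section
/- For all posterior distributions Q_1,…,Q_V over the voter sets H_1,…,H_V and any hyper-posterior distribution ρ over the V views, if the multiview Gibbs risk satisfies R_D(G_ρ) < 1/2, then the risk of the multiview weighted majority vote satisfies R_D(B_ρ) ≤ 1 − (1 − 2·E_{v∼ρ} R_D(G_{Q_v}))² / (1 − 2·E_{v∼ρ} d_D(Q_v)). -/
/-!
Let `M(x, y) = y · E_{v∼ρ} E_{h∼Q_v} h(x^v)` be the margin of the majority vote. For `±1`-valued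
votes and labels the 0-1 loss is `(1 - a b) / 2`, so `1 - 2 E_ρ R_D(G_{Q_v}) = E_D M`, which is
positive because `R_D(G_ρ) < 1/2`, and `1 - 2 E_ρ d_D(Q_v) = E_D E_ρ (E_{Q_v} h(x^v))²`, which
dominates `E_D M²` by Jensen's inequality for `ρ`. The majority vote errs only where `M ≤ 0`, and
Cantelli's inequality bounds `P(M ≤ 0)` by `1 - (E M)² / E M²`.
-/

open MeasureTheory

noncomputable section

/-- The 0-1 loss: `1` if the two values differ, `0` otherwise. -/
def zoLoss (a b : ℝ) : ℝ := if a = b then 0 else 1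

variable {V : ℕ} {X : Fin V → Type*} [∀ v, MeasurableSpace (X v)]
  {H : Fin V → Type*} [∀ v, MeasurableSpace (H v)]

/-- Multiview Gibbs risk `R_D(G_ρ)`. -/
def gibbsRisk (ev : ∀ v, H v → X v → ℝ) (D : Measure ((∀ v, X v) × ℝ))
    (Q : ∀ v, Measure (H v)) (ρ : Fin V → ℝ) : ℝ :=
  ∫ p, (∑ v, ρ v * ∫ h, zoLoss (ev v h (p.1 v)) p.2 ∂(Q v)) ∂D

/-- View-specific Gibbs risk `R_D(G_{Q_v})`. -/
def gibbsRiskView (ev : ∀ v, H v → X v → ℝ) (D : Measure ((∀ v, X v) × ℝ))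
    (Q : ∀ v, Measure (H v)) (v : Fin V) : ℝ :=
  ∫ p, (∫ h, zoLoss (ev v h (p.1 v)) p.2 ∂(Q v)) ∂D

/-- The multiview weighted majority vote `B_ρ`. -/
def majVote (ev : ∀ v, H v → X v → ℝ) (Q : ∀ v, Measure (H v)) (ρ : Fin V → ℝ)
    (x : ∀ v, X v) : ℝ :=
  Real.sign (∑ v, ρ v * ∫ h, ev v h (x v) ∂(Q v))

/-- Risk of the multiview weighted majority vote `R_D(B_ρ)`. -/
def mvRisk (ev : ∀ v, H v → X v → ℝ) (D : Measure ((∀ v, X v) × ℝ))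
    (Q : ∀ v, Measure (H v)) (ρ : Fin V → ℝ) : ℝ :=
  (D {p | majVote ev Q ρ p.1 ≠ p.2}).toReal

/-- View-specific expected disagreement `d_D(Q_v)` (over the marginal of `D` on `X`). -/
def disagreementView (ev : ∀ v, H v → X v → ℝ) (D : Measure ((∀ v, X v) × ℝ))
    (Q : ∀ v, Measure (H v)) (v : Fin V) : ℝ :=
  ∫ x, (∫ h, (∫ h', zoLoss (ev v h (x v)) (ev v h' (x v)) ∂(Q v)) ∂(Q v)) ∂(D.map Prod.fst)

lemma zoLoss_of_sign {a b : ℝ} (ha : a = 1 ∨ a = -1) (hb : b = 1 ∨ b = -1) :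
    zoLoss a b = (1 - a * b) / 2 := by
  rcases ha with rfl | rfl <;> rcases hb with rfl | rfl <;> norm_num [zoLoss]

lemma Finset.sq_sum_mul_le_sum_mul_sum_mul_sq {ι : Type*} (s : Finset ι) {w : ι → ℝ}
    (hw : ∀ i ∈ s, 0 ≤ w i) (a : ι → ℝ) :
    (∑ i ∈ s, w i * a i) ^ 2 ≤ (∑ i ∈ s, w i) * ∑ i ∈ s, w i * a i ^ 2 :=
  s.sum_sq_le_sum_mul_sum_of_sq_le_mul hw (fun i hi => mul_nonneg (hw i hi) (sq_nonneg _))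
    fun i _ => (by ring : (w i * a i) ^ 2 = w i * (w i * a i ^ 2)).le

lemma Finset.abs_sum_mul_le_one {ι : Type*} (s : Finset ι) {w a : ι → ℝ}
    (hw : ∀ i ∈ s, 0 ≤ w i) (hw1 : ∑ i ∈ s, w i = 1) (ha : ∀ i ∈ s, |a i| ≤ 1) :
    |∑ i ∈ s, w i * a i| ≤ 1 :=
  calc |∑ i ∈ s, w i * a i| ≤ ∑ i ∈ s, |w i * a i| := s.abs_sum_le_sum_abs _
    _ ≤ ∑ i ∈ s, w i := s.sum_le_sum fun i hi => by
        rw [abs_mul, abs_of_nonneg (hw i hi)]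
        exact mul_le_of_le_one_right (hw i hi) (ha i hi)
    _ = 1 := hw1

lemma Finset.one_sub_two_mul_sum_mul_one_sub_div_two {ι : Type*} (s : Finset ι) {w : ι → ℝ}
    (hw1 : ∑ i ∈ s, w i = 1) (c : ι → ℝ) :
    1 - 2 * ∑ i ∈ s, w i * ((1 - c i) / 2) = ∑ i ∈ s, w i * c i := by
  have : ∑ i ∈ s, w i * ((1 - c i) / 2) = (∑ i ∈ s, w i - ∑ i ∈ s, w i * c i) / 2 := by
    rw [← Finset.sum_sub_distrib, Finset.sum_div]
    exact Finset.sum_congr rfl fun i _ => by ring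
  rw [this, hw1]
  ring

section Cantelli

variable {Ω : Type*} [MeasurableSpace Ω] {μ : Measure Ω} [IsProbabilityMeasure μ] {M : Ω → ℝ}

/-- Cantelli's inequality in the form of the C-bound. -/
theorem measureReal_nonpos_le_one_sub_sq_integral_div (hM : MemLp M 2 μ)
    (hpos : 0 < ∫ ω, M ω ∂μ) {B : ℝ} (hB : ∫ ω, M ω ^ 2 ∂μ ≤ B) :
    μ.real {ω | M ω ≤ 0} ≤ 1 - (∫ ω, M ω ∂μ) ^ 2 / B := by
  set m := ∫ ω, M ω ∂μ
  rcases le_or_gt B 0 with hB0 | hB0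
  · have : m ^ 2 / B ≤ 0 := div_nonpos_of_nonneg_of_nonpos (sq_nonneg m) hB0
    linarith [measureReal_le_one (μ := μ) (s := {ω | M ω ≤ 0})]
  -- Markov's inequality for `(c - M)²`, with the optimal shift `c = B / m`.
  set c := B / m
  have hc : 0 < c := div_pos hB0 hpos
  have hsub : {ω | M ω ≤ 0} ⊆ {ω | c ^ 2 ≤ (c - M ω) ^ 2} := fun ω (hω : M ω ≤ 0) => by
    change c ^ 2 ≤ (c - M ω) ^ 2
    nlinarith
  have hint : ∫ ω, (c - M ω) ^ 2 ∂μ = c ^ 2 - 2 * c * m + ∫ ω, M ω ^ 2 ∂μ := by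
    have hexp : ∀ ω, (c - M ω) ^ 2 = c ^ 2 - 2 * c * M ω + M ω ^ 2 := fun ω => by ring
    simp_rw [hexp]
    rw [integral_add (f := fun ω => c ^ 2 - 2 * c * M ω)
      ((integrable_const _).sub ((hM.integrable one_le_two).const_mul _)) hM.integrable_sq,
      integral_sub (integrable_const _)
      ((hM.integrable one_le_two).const_mul _), integral_const_mul]
    simp [m]
  have hmarkov := mul_meas_ge_le_integral_of_nonneg (.of_forall fun ω => sq_nonneg (c - M ω))
    ((memLp_const c).sub hM).integrable_sq (c ^ 2)
  have hmono := measureReal_mono (μ := μ) hsub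
  have hcm : c * m = B := div_mul_cancel₀ B hpos.ne'
  have hscaled : c * μ.real {ω | M ω ≤ 0} ≤ c - m := by nlinarith
  have hmc : m / c ≤ 1 - μ.real {ω | M ω ≤ 0} := by rw [div_le_iff₀ hc]; linarith
  rw [show m ^ 2 / B = m / c by rw [← hcm]; field_simp]
  linarith

end Cantelli

lemma norm_le_one_of_sign {a : ℝ} (ha : a = 1 ∨ a = -1) : ‖a‖ ≤ 1 := by
  rcases ha with rfl | rfl <;> simp

lemma norm_mul_le_one_of_sign {y a : ℝ} (hy : y = 1 ∨ y = -1) (ha : |a| ≤ 1) : ‖y * a‖ ≤ 1 := by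
  rcases hy with rfl | rfl <;> simpa using ha

section SignValued

variable {α : Type*} [MeasurableSpace α] {ν : Measure α} {k : α → ℝ}

lemma integral_one_sub_div_two [IsProbabilityMeasure ν] (hk : Integrable k ν) :
    ∫ a, (1 - k a) / 2 ∂ν = (1 - ∫ a, k a ∂ν) / 2 := by
  rw [integral_div, integral_sub (integrable_const 1) hk]
  simp

lemma integrable_of_sign [IsFiniteMeasure ν] (hk : AEStronglyMeasurable k ν)
    (hks : ∀ a, k a = 1 ∨ k a = -1) :
    Integrable k ν :=
  .of_bound hk 1 (.of_forall fun a => norm_le_one_of_sign (hks a))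

lemma integral_zoLoss_of_sign [IsProbabilityMeasure ν] (hk : AEStronglyMeasurable k ν)
    (hks : ∀ a, k a = 1 ∨ k a = -1) {y : ℝ} (hy : y = 1 ∨ y = -1) :
    ∫ a, zoLoss (k a) y ∂ν = (1 - (∫ a, k a ∂ν) * y) / 2 := by
  simp_rw [zoLoss_of_sign (hks _) hy]
  rw [integral_one_sub_div_two ((integrable_of_sign hk hks).mul_const y), integral_mul_const]

lemma integral_integral_zoLoss_of_sign [IsProbabilityMeasure ν] (hk : AEStronglyMeasurable k ν)
    (hks : ∀ a, k a = 1 ∨ k a = -1) :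
    ∫ a, ∫ b, zoLoss (k a) (k b) ∂ν ∂ν = (1 - (∫ a, k a ∂ν) ^ 2) / 2 := by
  have hk' := integrable_of_sign hk hks
  have inner (a : α) : ∫ b, zoLoss (k a) (k b) ∂ν = (1 - k a * ∫ b, k b ∂ν) / 2 := by
    have (b : α) : zoLoss (k a) (k b) = (1 - k b * k a) / 2 := by
      rw [zoLoss_of_sign (hks a) (hks b), mul_comm]
    simp_rw [this]
    rw [integral_one_sub_div_two (hk'.mul_const _), integral_mul_const, mul_comm]
  simp_rw [inner]
  rw [integral_one_sub_div_two (hk'.mul_const _), integral_mul_const, sq]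

lemma abs_integral_le_one_of_sign [IsProbabilityMeasure ν] (hks : ∀ a, k a = 1 ∨ k a = -1) :
    |∫ a, k a ∂ν| ≤ 1 := by
  simpa using norm_integral_le_of_norm_le_const (μ := ν) (f := k) (C := 1)
    (.of_forall fun a => norm_le_one_of_sign (hks a))

end SignValued

def viewVote (ev : ∀ v, H v → X v → ℝ) (Q : ∀ v, Measure (H v)) (v : Fin V) (x : ∀ v, X v) :
    ℝ :=
  ∫ h, ev v h (x v) ∂(Q v)

def margin (ev : ∀ v, H v → X v → ℝ) (Q : ∀ v, Measure (H v)) (ρ : Fin V → ℝ)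
    (p : (∀ v, X v) × ℝ) : ℝ :=
  p.2 * ∑ v, ρ v * viewVote ev Q v p.1

section Multiview

variable {ev : ∀ v, H v → X v → ℝ} {Q : ∀ v, Measure (H v)} {D : Measure ((∀ v, X v) × ℝ)}
  {ρ : Fin V → ℝ}

lemma measurable_viewVote {v : Fin V} [SFinite (Q v)]
    (hmeas : Measurable fun q : H v × X v => ev v q.1 q.2) :
    Measurable (viewVote ev Q v) :=
  (hmeas.comp (measurable_snd.prodMk ((measurable_pi_apply v).comp measurable_fst))
    ).stronglyMeasurable.integral_prod_right'.measurable

lemma integral_zoLoss_ae_eq [∀ v, IsProbabilityMeasure (Q v)]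
    (hmeas : ∀ v, Measurable fun q : H v × X v => ev v q.1 q.2)
    (hsign : ∀ v h x, ev v h x = 1 ∨ ev v h x = -1) (hD : ∀ᵐ p ∂D, p.2 = 1 ∨ p.2 = -1)
    (v : Fin V) :
    (fun p => ∫ h, zoLoss (ev v h (p.1 v)) p.2 ∂(Q v)) =ᵐ[D]
      fun p => (1 - p.2 * viewVote ev Q v p.1) / 2 := by
  filter_upwards [hD] with p hp
  have hk : Measurable fun h => ev v h (p.1 v) :=
    (hmeas v).comp (measurable_id.prodMk measurable_const)
  rw [integral_zoLoss_of_sign hk.aestronglyMeasurable (fun h => hsign v h _) hp, mul_comm,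
    viewVote]

lemma integrable_label_mul_viewVote [∀ v, IsProbabilityMeasure (Q v)] [IsFiniteMeasure D]
    (hmeas : ∀ v, Measurable fun q : H v × X v => ev v q.1 q.2)
    (hsign : ∀ v h x, ev v h x = 1 ∨ ev v h x = -1) (hD : ∀ᵐ p ∂D, p.2 = 1 ∨ p.2 = -1)
    (v : Fin V) :
    Integrable (fun p => p.2 * viewVote ev Q v p.1) D :=
  .of_bound (measurable_snd.mul ((measurable_viewVote (hmeas v)).comp
    measurable_fst)).aestronglyMeasurable 1 <| hD.mono fun p hp =>
      norm_mul_le_one_of_sign hp (abs_integral_le_one_of_sign fun h => hsign v h (p.1 v))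

lemma measurable_margin [∀ v, IsProbabilityMeasure (Q v)]
    (hmeas : ∀ v, Measurable fun q : H v × X v => ev v q.1 q.2) :
    Measurable (margin ev Q ρ) :=
  measurable_snd.mul <| Finset.measurable_sum _ fun v _ =>
    ((measurable_viewVote (hmeas v)).comp measurable_fst).const_mul _

lemma memLp_margin [∀ v, IsProbabilityMeasure (Q v)] [IsFiniteMeasure D]
    (hmeas : ∀ v, Measurable fun q : H v × X v => ev v q.1 q.2)
    (hsign : ∀ v h x, ev v h x = 1 ∨ ev v h x = -1) (hD : ∀ᵐ p ∂D, p.2 = 1 ∨ p.2 = -1)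
    (hρ0 : ∀ v, 0 ≤ ρ v) (hρ1 : ∑ v, ρ v = 1) :
    MemLp (margin ev Q ρ) 2 D :=
  .of_bound (measurable_margin hmeas).aestronglyMeasurable 1 <| hD.mono fun p hp =>
    norm_mul_le_one_of_sign hp <| Finset.univ.abs_sum_mul_le_one (fun v _ => hρ0 v) hρ1
      fun v _ => abs_integral_le_one_of_sign fun h => hsign v h (p.1 v)

lemma mvRisk_le_measureReal_margin_nonpos [IsFiniteMeasure D]
    (hD : ∀ᵐ p ∂D, p.2 = 1 ∨ p.2 = -1) :
    mvRisk ev D Q ρ ≤ D.real {p | margin ev Q ρ p ≤ 0} := by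
  refine ENNReal.toReal_mono (measure_ne_top D _) (measure_mono_ae ?_)
  filter_upwards [hD] with p hp
  intro (herr : Real.sign (∑ v, ρ v * viewVote ev Q v p.1) ≠ p.2)
  show p.2 * ∑ v, ρ v * viewVote ev Q v p.1 ≤ 0
  by_contra! hpos
  apply herr
  rcases hp with hy | hy <;> rw [hy] at hpos ⊢
  · exact Real.sign_of_pos (by linarith)
  · exact Real.sign_of_neg (by linarith)

lemma integrable_integral_zoLoss [∀ v, IsProbabilityMeasure (Q v)] [IsFiniteMeasure D]
    (hmeas : ∀ v, Measurable fun q : H v × X v => ev v q.1 q.2)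
    (hsign : ∀ v h x, ev v h x = 1 ∨ ev v h x = -1) (hD : ∀ᵐ p ∂D, p.2 = 1 ∨ p.2 = -1)
    (v : Fin V) :
    Integrable (fun p => ∫ h, zoLoss (ev v h (p.1 v)) p.2 ∂(Q v)) D :=
  (((integrable_const 1).sub (integrable_label_mul_viewVote hmeas hsign hD v)).div_const 2).congr
    (integral_zoLoss_ae_eq hmeas hsign hD v).symm

lemma gibbsRiskView_eq [∀ v, IsProbabilityMeasure (Q v)] [IsProbabilityMeasure D]
    (hmeas : ∀ v, Measurable fun q : H v × X v => ev v q.1 q.2)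
    (hsign : ∀ v h x, ev v h x = 1 ∨ ev v h x = -1) (hD : ∀ᵐ p ∂D, p.2 = 1 ∨ p.2 = -1)
    (v : Fin V) :
    gibbsRiskView ev D Q v = (1 - ∫ p, p.2 * viewVote ev Q v p.1 ∂D) / 2 := by
  rw [gibbsRiskView, integral_congr_ae (integral_zoLoss_ae_eq hmeas hsign hD v),
    integral_one_sub_div_two (integrable_label_mul_viewVote hmeas hsign hD v)]

lemma gibbsRisk_eq_sum_gibbsRiskView [∀ v, IsProbabilityMeasure (Q v)] [IsFiniteMeasure D]
    (hmeas : ∀ v, Measurable fun q : H v × X v => ev v q.1 q.2)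
    (hsign : ∀ v h x, ev v h x = 1 ∨ ev v h x = -1) (hD : ∀ᵐ p ∂D, p.2 = 1 ∨ p.2 = -1) :
    gibbsRisk ev D Q ρ = ∑ v, ρ v * gibbsRiskView ev D Q v := by
  rw [gibbsRisk, integral_finsetSum _ fun v _ =>
    (integrable_integral_zoLoss hmeas hsign hD v).const_mul _]
  simp_rw [integral_const_mul, gibbsRiskView]

lemma one_sub_two_mul_sum_gibbsRiskView [∀ v, IsProbabilityMeasure (Q v)]
    [IsProbabilityMeasure D] (hmeas : ∀ v, Measurable fun q : H v × X v => ev v q.1 q.2)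
    (hsign : ∀ v h x, ev v h x = 1 ∨ ev v h x = -1) (hD : ∀ᵐ p ∂D, p.2 = 1 ∨ p.2 = -1)
    (hρ1 : ∑ v, ρ v = 1) :
    1 - 2 * ∑ v, ρ v * gibbsRiskView ev D Q v = ∫ p, margin ev Q ρ p ∂D := by
  simp_rw [gibbsRiskView_eq hmeas hsign hD, Finset.univ.one_sub_two_mul_sum_mul_one_sub_div_two hρ1,
    ← integral_const_mul]
  rw [← integral_finsetSum _ fun v _ =>
    (integrable_label_mul_viewVote hmeas hsign hD v).const_mul _]
  simp_rw [margin, Finset.mul_sum, mul_left_comm]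

lemma integrable_viewVote_fst_sq [∀ v, IsProbabilityMeasure (Q v)] [IsFiniteMeasure D]
    (hmeas : ∀ v, Measurable fun q : H v × X v => ev v q.1 q.2)
    (hsign : ∀ v h x, ev v h x = 1 ∨ ev v h x = -1) (v : Fin V) :
    Integrable (fun p : (∀ v, X v) × ℝ => viewVote ev Q v p.1 ^ 2) D :=
  .of_bound (((measurable_viewVote (hmeas v)).comp measurable_fst).pow_const 2).aestronglyMeasurable
    1 <| .of_forall fun p => by
      rw [norm_pow, Real.norm_eq_abs]
      exact pow_le_one₀ (abs_nonneg _) (abs_integral_le_one_of_sign fun h => hsign v h (p.1 v))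

lemma disagreementView_eq [∀ v, IsProbabilityMeasure (Q v)] [IsProbabilityMeasure D]
    (hmeas : ∀ v, Measurable fun q : H v × X v => ev v q.1 q.2)
    (hsign : ∀ v h x, ev v h x = 1 ∨ ev v h x = -1) (v : Fin V) :
    disagreementView ev D Q v = (1 - ∫ p, viewVote ev Q v p.1 ^ 2 ∂D) / 2 := by
  have hk (x : ∀ v, X v) : Measurable fun h => ev v h (x v) :=
    (hmeas v).comp (measurable_id.prodMk measurable_const)
  simp_rw [disagreementView, integral_integral_zoLoss_of_sign (hk _).aestronglyMeasurable
    (fun h => hsign v h _)]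
  change ∫ x, (1 - viewVote ev Q v x ^ 2) / 2 ∂(D.map Prod.fst) = _
  rw [integral_map measurable_fst.aemeasurable (((measurable_viewVote (hmeas v)).pow_const 2
    ).const_sub 1 |>.div_const 2).aestronglyMeasurable,
    integral_one_sub_div_two (integrable_viewVote_fst_sq hmeas hsign v)]

lemma one_sub_two_mul_sum_disagreementView [∀ v, IsProbabilityMeasure (Q v)]
    [IsProbabilityMeasure D] (hmeas : ∀ v, Measurable fun q : H v × X v => ev v q.1 q.2)
    (hsign : ∀ v h x, ev v h x = 1 ∨ ev v h x = -1) (hρ1 : ∑ v, ρ v = 1) :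
    1 - 2 * ∑ v, ρ v * disagreementView ev D Q v =
      ∫ p, ∑ v, ρ v * viewVote ev Q v p.1 ^ 2 ∂D := by
  simp_rw [disagreementView_eq hmeas hsign, Finset.univ.one_sub_two_mul_sum_mul_one_sub_div_two hρ1]
  rw [integral_finsetSum _ fun v _ => (integrable_viewVote_fst_sq hmeas hsign v).const_mul _]
  simp_rw [integral_const_mul]

lemma integral_margin_sq_le [∀ v, IsProbabilityMeasure (Q v)] [IsFiniteMeasure D]
    (hmeas : ∀ v, Measurable fun q : H v × X v => ev v q.1 q.2)
    (hsign : ∀ v h x, ev v h x = 1 ∨ ev v h x = -1) (hD : ∀ᵐ p ∂D, p.2 = 1 ∨ p.2 = -1)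
    (hρ0 : ∀ v, 0 ≤ ρ v) (hρ1 : ∑ v, ρ v = 1) :
    ∫ p, margin ev Q ρ p ^ 2 ∂D ≤ ∫ p, ∑ v, ρ v * viewVote ev Q v p.1 ^ 2 ∂D := by
  refine integral_mono_ae (memLp_margin hmeas hsign hD hρ0 hρ1).integrable_sq
    (integrable_finsetSum _ fun v _ => (integrable_viewVote_fst_sq hmeas hsign v).const_mul _) ?_
  filter_upwards [hD] with p hp
  have hy : p.2 ^ 2 = 1 := by rcases hp with h | h <;> simp [h]
  calc margin ev Q ρ p ^ 2 = (∑ v, ρ v * viewVote ev Q v p.1) ^ 2 := by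
        rw [margin, mul_pow, hy, one_mul]
    _ ≤ (∑ v, ρ v) * ∑ v, ρ v * viewVote ev Q v p.1 ^ 2 :=
        Finset.univ.sq_sum_mul_le_sum_mul_sum_mul_sq (fun v _ => hρ0 v) _
    _ = ∑ v, ρ v * viewVote ev Q v p.1 ^ 2 := by rw [hρ1, one_mul]

end Multiview

theorem multiview_cbound_second_form_general
    (ev : ∀ v, H v → X v → ℝ)
    (hmeas : ∀ v, Measurable (fun q : H v × X v => ev v q.1 q.2))
    (hsign : ∀ v h x, ev v h x = 1 ∨ ev v h x = -1)
    (D : Measure ((∀ v, X v) × ℝ)) [IsProbabilityMeasure D]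
    (hD : ∀ᵐ p ∂D, p.2 = 1 ∨ p.2 = -1)
    (Q : ∀ v, Measure (H v)) [∀ v, IsProbabilityMeasure (Q v)]
    (ρ : Fin V → ℝ) (hρ0 : ∀ v, 0 ≤ ρ v) (hρ1 : ∑ v, ρ v = 1)
    (hgibbs : gibbsRisk ev D Q ρ < 1 / 2) :
    mvRisk ev D Q ρ ≤
      1 - (1 - 2 * ∑ v, ρ v * gibbsRiskView ev D Q v) ^ 2 /
        (1 - 2 * ∑ v, ρ v * disagreementView ev D Q v) := by
  rw [gibbsRisk_eq_sum_gibbsRiskView hmeas hsign hD] at hgibbs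
  have hmargin : 0 < ∫ p, margin ev Q ρ p ∂D := by
    rw [← one_sub_two_mul_sum_gibbsRiskView hmeas hsign hD hρ1]
    linarith
  rw [one_sub_two_mul_sum_gibbsRiskView hmeas hsign hD hρ1,
    one_sub_two_mul_sum_disagreementView hmeas hsign hρ1]
  exact (mvRisk_le_measureReal_margin_nonpos hD).trans <|
    measureReal_nonpos_le_one_sub_sq_integral_div (memLp_margin hmeas hsign hD hρ0 hρ1) hmargin
      (integral_margin_sq_le hmeas hsign hD hρ0 hρ1)

/-- **Multiview C-Bound (second form).** If `R_D(G_ρ) < 1/2`, then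
`R_D(B_ρ) ≤ 1 - (1 - 2 E_{v∼ρ} R_D(G_{Q_v}))² / (1 - 2 E_{v∼ρ} d_D(Q_v))`. -/
theorem multiview_cbound_second_form
    (hV : 2 ≤ V)
    (ev : ∀ v, H v → X v → ℝ)
    (hmeas : ∀ v, Measurable (fun q : H v × X v => ev v q.1 q.2))
    (hsign : ∀ v h x, ev v h x = 1 ∨ ev v h x = -1)
    (D : Measure ((∀ v, X v) × ℝ)) [IsProbabilityMeasure D]
    (hD : ∀ᵐ p ∂D, p.2 = 1 ∨ p.2 = -1)
    (Q : ∀ v, Measure (H v)) [∀ v, IsProbabilityMeasure (Q v)]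
    (ρ : Fin V → ℝ) (hρ0 : ∀ v, 0 ≤ ρ v) (hρ1 : ∑ v, ρ v = 1)
    (hgibbs : gibbsRisk ev D Q ρ < 1 / 2) :
    mvRisk ev D Q ρ ≤
      1 - (1 - 2 * ∑ v, ρ v * gibbsRiskView ev D Q v) ^ 2 /
        (1 - 2 * ∑ v, ρ v * disagreementView ev D Q v) :=
  multiview_cbound_second_form_general ev hmeas hsign D hD Q ρ hρ0 hρ1 hgibbs
end
end

section
/- (Change of measure inequality for a two-level hierarchy.) For any set of prior distributions P_1,…,P_V over the voter sets H_1,…,H_V and any set of posterior distributions Q_1,…,Q_V over H_1,…,H_V (with each Q_v absolutely continuous with respect to P_v), for any hyper-prior distribution π and hyper-posterior distribution ρ over the views {1,…,V} (with ρ absolutely continuous with respect to π), and for any measurable function φ : H_v → ℝ (one such function per view, with the relevant expectations finite), one has E_{v∼ρ} E_{h∼Q_v} φ(h) ≤ E_{v∼ρ} KL(Q_v‖P_v) + KL(ρ‖π) + ln( E_{v∼π} E_{h∼P_v} e^{φ(h)} ). -/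
open MeasureTheory

noncomputable section

/-- Kullback-Leibler divergence `KL(Q‖P) = E_{h∼Q} ln(dQ/dP)` (real-valued;
finiteness is assumed via integrability hypotheses). -/
def klReal {α : Type*} [MeasurableSpace α] (Q P : Measure α) : ℝ :=
  ∫ a, Real.log ((Q.rnDeriv P a).toReal) ∂Q

/-!
Both levels are instances of the Donsker–Varadhan change of measure
`E_Q φ ≤ KL(Q‖P) + log E_P e^φ`, which is Gibbs' inequality `KL(Q‖P_φ) ≥ 0` for the tilted
measure `dP_φ ∝ e^φ dP`. Applying it to each view bounds `E_{Q_v} φ_v` by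
`KL(Q_v‖P_v) + log Z_v` with `Z_v = E_{P_v} e^{φ_v}`; the discrete version over the views,
with the function `v ↦ log Z_v`, then bounds `E_ρ log Z_v` by `KL(ρ‖π) + log E_π Z_v`.
-/

open InformationTheory

theorem integral_le_klReal_add_log_integral_exp {α : Type*} [MeasurableSpace α]
    {P Q : Measure α} [SigmaFinite P] [NeZero P] [IsProbabilityMeasure Q] (hQP : Q ≪ P)
    {φ : α → ℝ} (hφQ : Integrable φ Q) (hφP : Integrable (fun x ↦ Real.exp (φ x)) P)
    (hkl : Integrable (llr Q P) Q) :
    ∫ x, φ x ∂Q ≤ klReal Q P + Real.log (∫ x, Real.exp (φ x) ∂P) := by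
  have := isProbabilityMeasure_tilted hφP
  have gibbs := integral_llr_add_sub_measure_univ_nonneg
    (hQP.trans (absolutelyContinuous_tilted hφP)) (integrable_llr_tilted_right hQP hφQ hkl hφP)
  rw [integral_llr_tilted_right hQP hφQ hφP hkl] at gibbs
  simp only [probReal_univ, add_sub_cancel_right] at gibbs
  change _ ≤ ∫ x, llr Q P x ∂Q + _
  linarith

/-- `log x ≤ x - 1` at `x = π e^ψ / (Z ρ)`, multiplied by `ρ`. -/
theorem mul_sub_log_div_sub_log_le {ρ π ψ Z : ℝ} (hρ : 0 ≤ ρ) (hπ : 0 ≤ π)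
    (hρπ : π = 0 → ρ = 0) (hZ : 0 < Z) :
    ρ * (ψ - Real.log (ρ / π) - Real.log Z) ≤ π * Real.exp ψ / Z - ρ := by
  rcases hρ.eq_or_lt with rfl | hρ
  · simp only [zero_mul, sub_zero]
    positivity
  have hπ : 0 < π := hπ.lt_of_ne fun h ↦ hρ.ne' (hρπ h.symm)
  have hlog : ψ - Real.log (ρ / π) - Real.log Z = Real.log (π * Real.exp ψ / Z / ρ) := by
    rw [Real.log_div (by positivity) hρ.ne', Real.log_div (by positivity) hZ.ne',
      Real.log_mul hπ.ne' (Real.exp_pos ψ).ne', Real.log_exp, Real.log_div hρ.ne' hπ.ne']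
    ring
  calc ρ * (ψ - Real.log (ρ / π) - Real.log Z)
      ≤ ρ * (π * Real.exp ψ / Z / ρ - 1) := by
        rw [hlog]
        exact mul_le_mul_of_nonneg_left (Real.log_le_sub_one_of_pos (by positivity)) hρ.le
    _ = π * Real.exp ψ / Z - ρ := by field_simp

theorem sum_mul_le_sum_mul_log_div_add_log_sum_mul_exp {ι : Type*} [Fintype ι]
    {ρ π : ι → ℝ} (hρ0 : ∀ i, 0 ≤ ρ i) (hρ1 : ∑ i, ρ i = 1) (hπ0 : ∀ i, 0 ≤ π i)
    (hρπ : ∀ i, π i = 0 → ρ i = 0) (ψ : ι → ℝ) :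
    ∑ i, ρ i * ψ i ≤ ∑ i, ρ i * Real.log (ρ i / π i) + Real.log (∑ i, π i * Real.exp (ψ i)) := by
  set Z := ∑ i, π i * Real.exp (ψ i)
  have hZ : 0 < Z := by
    obtain ⟨i, -, hi⟩ := Finset.exists_ne_zero_of_sum_ne_zero (hρ1.trans_ne one_ne_zero)
    have hπi : 0 < π i := (hπ0 i).lt_of_ne fun h ↦ hi (hρπ i h.symm)
    exact Finset.sum_pos' (fun j _ ↦ by have := hπ0 j; positivity)
      ⟨i, Finset.mem_univ i, by positivity⟩
  have hsum : ∑ i, ρ i * (ψ i - Real.log (ρ i / π i) - Real.log Z)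
      ≤ ∑ i, (π i * Real.exp (ψ i) / Z - ρ i) :=
    Finset.sum_le_sum fun i _ ↦ mul_sub_log_div_sub_log_le (hρ0 i) (hπ0 i) (hρπ i) hZ
  simp only [mul_sub, Finset.sum_sub_distrib, ← Finset.sum_mul, ← Finset.sum_div, hρ1] at hsum
  linarith [div_self hZ.ne']

theorem change_of_measure_two_level_general
    {V : ℕ}
    {H : Fin V → Type*} [∀ v, MeasurableSpace (H v)]
    (P Q : ∀ v, Measure (H v))
    [∀ v, IsProbabilityMeasure (P v)] [∀ v, IsProbabilityMeasure (Q v)]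
    (hQP : ∀ v, Q v ≪ P v)
    (π ρ : Fin V → ℝ)
    (hπ0 : ∀ v, 0 ≤ π v)
    (hρ0 : ∀ v, 0 ≤ ρ v) (hρ1 : ∑ v, ρ v = 1)
    (hρπ : ∀ v, π v = 0 → ρ v = 0)
    (φ : ∀ v, H v → ℝ)
    (hφint : ∀ v, Integrable (φ v) (Q v))
    (hφexp : ∀ v, Integrable (fun h => Real.exp (φ v h)) (P v))
    (hklint : ∀ v, Integrable (fun h => Real.log (((Q v).rnDeriv (P v) h).toReal)) (Q v)) :
    ∑ v, ρ v * ∫ h, φ v h ∂(Q v) ≤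
      (∑ v, ρ v * klReal (Q v) (P v)) + (∑ v, ρ v * Real.log (ρ v / π v)) +
        Real.log (∑ v, π v * ∫ h, Real.exp (φ v h) ∂(P v)) := by
  set Z : Fin V → ℝ := fun v ↦ ∫ h, Real.exp (φ v h) ∂(P v)
  have hviews := sum_mul_le_sum_mul_log_div_add_log_sum_mul_exp hρ0 hρ1 hπ0 hρπ (Real.log ∘ Z)
  have hexp_log : ∀ v, Real.exp (Real.log (Z v)) = Z v :=
    fun v ↦ Real.exp_log (integral_exp_pos (hφexp v))
  simp only [Function.comp_apply, hexp_log] at hviews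
  calc ∑ v, ρ v * ∫ h, φ v h ∂(Q v)
      ≤ ∑ v, ρ v * (klReal (Q v) (P v) + Real.log (Z v)) :=
        Finset.sum_le_sum fun v _ ↦ mul_le_mul_of_nonneg_left
          (integral_le_klReal_add_log_integral_exp (hQP v) (hφint v) (hφexp v) (hklint v))
          (hρ0 v)
    _ = ∑ v, ρ v * klReal (Q v) (P v) + ∑ v, ρ v * Real.log (Z v) := by
        simp only [mul_add, Finset.sum_add_distrib]
    _ ≤ _ := by linarith

/-- **Change of measure inequality for a two-level hierarchy.**
`E_{v∼ρ} E_{h∼Q_v} φ_v(h) ≤ E_{v∼ρ} KL(Q_v‖P_v) + KL(ρ‖π) + ln(E_{v∼π} E_{h∼P_v} e^{φ_v(h)})`. -/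
theorem change_of_measure_two_level
    {V : ℕ} (hV : 2 ≤ V)
    {H : Fin V → Type*} [∀ v, MeasurableSpace (H v)]
    (P Q : ∀ v, Measure (H v))
    [∀ v, IsProbabilityMeasure (P v)] [∀ v, IsProbabilityMeasure (Q v)]
    (hQP : ∀ v, Q v ≪ P v)
    (π ρ : Fin V → ℝ)
    (hπ0 : ∀ v, 0 ≤ π v) (hπ1 : ∑ v, π v = 1)
    (hρ0 : ∀ v, 0 ≤ ρ v) (hρ1 : ∑ v, ρ v = 1)
    (hρπ : ∀ v, π v = 0 → ρ v = 0)
    (φ : ∀ v, H v → ℝ)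
    (hφmeas : ∀ v, Measurable (φ v))
    (hφint : ∀ v, Integrable (φ v) (Q v))
    (hφexp : ∀ v, Integrable (fun h => Real.exp (φ v h)) (P v))
    (hklint : ∀ v, Integrable (fun h => Real.log (((Q v).rnDeriv (P v) h).toReal)) (Q v)) :
    ∑ v, ρ v * ∫ h, φ v h ∂(Q v) ≤
      (∑ v, ρ v * klReal (Q v) (P v)) + (∑ v, ρ v * Real.log (ρ v / π v)) +
        Real.log (∑ v, π v * ∫ h, Real.exp (φ v h) ∂(P v)) :=
  change_of_measure_two_level_general P Q hQP π ρ hπ0 hρ0 hρ1 hρπ φ hφint hφexp hklint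
end
end
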